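/- arXiv:2411.02936 — 5 statements merged into one kernel-verified Lean document; each statement's English description precedes it below -/
import Mathlib

section
/- Let m be a positive natural number and let A and B be sets of Boolean vectors of length m. Then there exists a monotone Boolean function f : (Fin m → Bool) → Bool with f a = true for every a ∈ A and f (complement of b) = false for every b ∈ B, if and only if for every a ∈ A and every b ∈ B there exists an index i with a i = true and b i = true (i.e., the pair (A,B) contains no orthogonal pair). -/
/-- A pair (A, B) of sets of Boolean vectors of length `m` can be separated by a
monotone Boolean function `f` (with `f a = true` on `A` and `f (complement b) = false`
for `b ∈ B`) iff every `a ∈ A` and `b ∈ B` share a coordinate where both are `true`. -/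
theorem stmt_0 (m : ℕ) (hm : 0 < m) (A B : Set (Fin m → Bool)) :
    (∃ f : (Fin m → Bool) → Bool, Monotone f ∧
        (∀ a ∈ A, f a = true) ∧ (∀ b ∈ B, f (fun i => !b i) = false)) ↔
    (∀ a ∈ A, ∀ b ∈ B, ∃ i : Fin m, a i = true ∧ b i = true) := by
  constructor
  · rintro ⟨f, hf, hA, hB⟩ a ha b hb
    by_contra h
    push_neg at h
    have hle : a ≤ (fun i => !b i) := by
      intro i
      cases hai : a i with
      | false => simp
      | true =>
        have := h i hai
        simp [this]
    have := hf hle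
    rw [hA a ha, hB b hb] at this
    exact absurd this (by simp)
  · intro h
    classical
    refine ⟨fun x => decide (∃ a ∈ A, ∀ i, a i = true → x i = true), ?_, ?_, ?_⟩
    · intro x y hxy
      have : (∃ a ∈ A, ∀ i, a i = true → x i = true) →
          (∃ a ∈ A, ∀ i, a i = true → y i = true) := by
        rintro ⟨a, ha, hax⟩
        refine ⟨a, ha, fun i hi => ?_⟩
        have h1 := hax i hi
        have h2 := hxy i
        rw [h1] at h2
        cases hy : y i with
        | true => rfl
        | false => rw [hy] at h2; exact absurd h2 (by simp)
      by_cases hex : ∃ a ∈ A, ∀ i, a i = true → x i = true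
      · simp [hex, this hex]
      · simp [hex]
    · intro a ha
      simp only [decide_eq_true_eq]
      exact ⟨a, ha, fun i hi => by rw [hi]⟩
    · intro b hb
      simp only [decide_eq_false_iff_not]
      rintro ⟨a, ha, hab⟩
      obtain ⟨i, hai, hbi⟩ := h a ha b hb
      have := hab i hai
      simp [hbi] at this
end

section
/- Let n be even and F a CNF formula over n variables with m clauses. For a partial assignment x : Fin (n/2) → Bool to the first n/2 variables, define A_F x : Fin m → Bool by (A_F x) j = true iff no literal of clause j on one of the first n/2 variables is satisfied by x; for a partial assignment y to the last n/2 variables, define B_F y : Fin m → Bool analogously using the last n/2 variables. Then F is satisfiable if and only if there exist partial assignments x and y such that the vectors A_F x and B_F y are orthogonal, i.e., there is no index j with (A_F x) j = true and (B_F y) j = true. -/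
/-- Williams' SAT-to-OV reduction: a CNF formula `F` over an even number `n` of
variables is satisfiable iff there are partial assignments `x` (to the first `n/2`
variables) and `y` (to the last `n/2` variables) whose associated Boolean vectors
`A_F x` and `B_F y` are orthogonal. -/
theorem stmt_2 (n m : ℕ) (hn : n % 2 = 0) (F : Fin m → Finset (Fin n × Bool)) :
    (∃ σ : Fin n → Bool, ∀ j : Fin m, ∃ l ∈ F j, σ l.1 = l.2) ↔
    (∃ x y : Fin (n / 2) → Bool,
      ¬ ∃ j : Fin m,
        (!decide (∃ (v : Fin (n / 2)) (p : Bool),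
            (Fin.castLE (Nat.div_le_self n 2) v, p) ∈ F j ∧ x v = p)) = true ∧
        (!decide (∃ (v : Fin (n / 2)) (p : Bool),
            ((⟨n / 2 + v.1, by have := v.isLt; omega⟩ : Fin n), p) ∈ F j ∧ y v = p)) = true) := by
  constructor
  · rintro ⟨σ, hσ⟩
    refine ⟨fun v => σ (Fin.castLE (Nat.div_le_self n 2) v),
      fun v => σ ⟨n / 2 + v.1, by have := v.isLt; omega⟩, ?_⟩
    rintro ⟨j, hA, hB⟩
    simp only [Bool.not_eq_true', decide_eq_false_iff_not] at hA hB
    obtain ⟨⟨i, p⟩, hmem, hval⟩ := hσ j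
    by_cases hi : i.1 < n / 2
    · exact hA ⟨⟨i.1, hi⟩, p, by simpa [Fin.castLE, Fin.ext_iff] using hmem, hval⟩
    · have hlt : i.1 - n / 2 < n / 2 := by have := i.isLt; omega
      have heq : (⟨n / 2 + (⟨i.1 - n / 2, hlt⟩ : Fin (n / 2)).1,
          by have := hlt; omega⟩ : Fin n) = i := by
        simp only [Fin.ext_iff]; omega
      exact hB ⟨⟨i.1 - n / 2, hlt⟩, p, by rw [heq]; exact hmem, by rw [heq]; exact hval⟩
  · rintro ⟨x, y, h⟩
    refine ⟨fun i => if hi : i.1 < n / 2 then x ⟨i.1, hi⟩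
      else y ⟨i.1 - n / 2, by have := i.isLt; omega⟩, fun j => ?_⟩
    have := fun hA hB => h ⟨j, hA, hB⟩
    by_cases hA : ∃ (v : Fin (n / 2)) (p : Bool),
        (Fin.castLE (Nat.div_le_self n 2) v, p) ∈ F j ∧ x v = p
    · obtain ⟨v, p, hmem, hval⟩ := hA
      refine ⟨(Fin.castLE (Nat.div_le_self n 2) v, p), hmem, ?_⟩
      simpa [Fin.castLE, v.isLt] using hval
    · have hB : ∃ (v : Fin (n / 2)) (p : Bool),
          ((⟨n / 2 + v.1, by have := v.isLt; omega⟩ : Fin n), p) ∈ F j ∧ y v = p := by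
        by_contra hB
        exact this (by simp only [Bool.not_eq_true', decide_eq_false_iff_not]; exact hA) (by simp only [Bool.not_eq_true', decide_eq_false_iff_not]; exact hB)
      obtain ⟨v, p, hmem, hval⟩ := hB
      refine ⟨(⟨n / 2 + v.1, by have := v.isLt; omega⟩, p), hmem, ?_⟩
      have : ¬ (n / 2 + v.1 < n / 2) := by omega
      simpa [this] using hval
end

section
/- Let t divide n and let F be a CNF formula over n variables with m clauses. Partition the variables into t consecutive groups of size n/t. For i ∈ Fin t and a partial assignment x : Fin (n/t) → Bool to the i-th group, define A_F^i x : Fin m → Bool by (A_F^i x) j = true iff no literal of clause j on a variable from group i is satisfied by x. Then F is satisfiable if and only if there exist partial assignments x_1, …, x_t (one to each group) such that for every clause index j there exists some i with (A_F^i x_i) j = false. -/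
/-- Reduction from SAT to t-OV: with the variables partitioned into `t` consecutive
groups of size `n/t`, the formula `F` is satisfiable iff there are partial assignments
`x i` (one per group) such that for every clause `j` some vector `A_F^i (x i)` has a
`false` entry at `j` (i.e., some literal of clause `j` on a group-`i` variable is
satisfied by `x i`). -/
theorem stmt_4 (n m t : ℕ) (ht : t ∣ n) (F : Fin m → Finset (Fin n × Bool)) :
    (∃ σ : Fin n → Bool, ∀ j : Fin m, ∃ l ∈ F j, σ l.1 = l.2) ↔
    (∃ x : Fin t → Fin (n / t) → Bool, ∀ j : Fin m, ∃ i : Fin t,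
      (!decide (∃ (u : Fin (n / t)) (p : Bool),
          ((⟨i.1 * (n / t) + u.1, by
              have h1 : i.1 + 1 ≤ t := i.isLt
              have h2 : u.1 < n / t := u.isLt
              have h3 : t * (n / t) = n := Nat.mul_div_cancel' ht
              calc i.1 * (n / t) + u.1 < (i.1 + 1) * (n / t) := by
                    rw [Nat.add_mul, Nat.one_mul]; omega
                _ ≤ t * (n / t) := Nat.mul_le_mul h1 le_rfl
                _ = n := h3⟩ : Fin n), p) ∈ F j ∧ x i u = p)) = false) := by
  have h3 : t * (n / t) = n := Nat.mul_div_cancel' ht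
  have hd : ∀ v : Fin n, 0 < n / t := by
    intro v
    rcases Nat.eq_zero_or_pos (n / t) with h | h
    · exfalso
      have h0 : n = 0 := by rw [h, Nat.mul_zero] at h3; omega
      have := v.isLt; omega
    · exact h
  have hdiv : ∀ v : Fin n, v.1 / (n / t) < t := by
    intro v
    have := hd v
    have hv := v.isLt
    exact Nat.div_lt_iff_lt_mul this |>.mpr (by rw [h3]; exact v.isLt)
  have hmod : ∀ v : Fin n, v.1 % (n / t) < n / t := fun v => Nat.mod_lt _ (hd v)
  constructor
  · rintro ⟨σ, hσ⟩
    refine ⟨fun i u => σ ⟨i.1 * (n / t) + u.1, by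
      have h2 := u.isLt
      have h1 : i.1 + 1 ≤ t := i.isLt
      calc i.1 * (n / t) + u.1 < (i.1 + 1) * (n / t) := by
            rw [Nat.add_mul, Nat.one_mul]; omega
        _ ≤ t * (n / t) := Nat.mul_le_mul h1 le_rfl
        _ = n := h3⟩, fun j => ?_⟩
    obtain ⟨l, hl, hsat⟩ := hσ j
    refine ⟨⟨l.1.1 / (n / t), hdiv l.1⟩, ?_⟩
    simp only [Bool.not_eq_false', decide_eq_true_eq]
    refine ⟨⟨l.1.1 % (n / t), hmod l.1⟩, l.2, ?_, ?_⟩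
    · convert hl using 2
      ext
      exact Nat.div_add_mod' l.1.1 (n / t)
    · convert hsat using 2
      ext
      exact Nat.div_add_mod' l.1.1 (n / t)
  · rintro ⟨x, hx⟩
    refine ⟨fun v => x ⟨v.1 / (n / t), hdiv v⟩ ⟨v.1 % (n / t), hmod v⟩, fun j => ?_⟩
    obtain ⟨i, hi⟩ := hx j
    simp only [Bool.not_eq_false', decide_eq_true_eq] at hi
    obtain ⟨u, p, hmem, hxp⟩ := hi
    refine ⟨_, hmem, ?_⟩
    simp only
    have hpos : 0 < n / t := lt_of_le_of_lt (Nat.zero_le _) u.isLt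
    have hq : (i.1 * (n / t) + u.1) / (n / t) = i.1 := by
      rw [Nat.mul_comm, Nat.mul_add_div hpos, Nat.div_eq_of_lt u.isLt, Nat.add_zero]
    have hr : (i.1 * (n / t) + u.1) % (n / t) = u.1 := by
      rw [Nat.add_mod, Nat.mul_mod_left]
      simp [Nat.mod_eq_of_lt u.isLt]
    convert hxp using 2 <;> ext <;> simp [hq, hr]
end

section
/- Let n be divisible by 4 and let F be a CNF formula over n variables with m clauses whose variables are partitioned into four groups G_0, G_1, G_2, G_3 of size n/4 each, and let ℓ : Fin m → Fin 4 be a labeling such that clause j contains no variable from group G_{ℓ(j)}. For i ∈ {0,1,2,3} and partial assignments U_1, U_2, U_3 to the groups G_{(i+1) mod 4}, G_{(i+2) mod 4}, G_{(i+3) mod 4} respectively, let T_i(U_1, U_2, U_3) denote the number of clauses with label i satisfied by this joint partial assignment. Then, for every natural number t, there exists a full assignment satisfying exactly t clauses of F if and only if there exist partial assignments U_0, U_1, U_2, U_3 to the groups G_0, G_1, G_2, G_3 such that T_0(U_1,U_2,U_3) + T_1(U_2,U_3,U_0) + T_2(U_3,U_0,U_1) + T_3(U_0,U_1,U_2) =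 t. -/
/-- Key intermediate claim in the proof of Theorem 2.8: with the variables partitioned
into four groups of size `n/4` (via the group map `g`) and a labeling `ℓ` such that
clause `j` contains no variable from group `ℓ j`, a full assignment satisfying exactly
`t` clauses exists iff there are partial assignments `U i` to the four groups such that
the four counts `T_i` of satisfied clauses with label `i` sum to `t`. -/
theorem stmt_6 (n m : ℕ) (hn : n % 4 = 0)
    (F : Fin m → Finset (Fin n × Bool))
    (g : Fin n → Fin 4)
    (hg : ∀ i : Fin 4, (Finset.univ.filter fun v : Fin n => g v = i).card = n / 4)
    (ℓ : Fin m → Fin 4)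
    (hℓ : ∀ j : Fin m, ∀ l ∈ F j, g l.1 ≠ ℓ j)
    (t : ℕ) :
    (∃ σ : Fin n → Bool,
        (Finset.univ.filter fun j : Fin m => ∃ l ∈ F j, σ l.1 = l.2).card = t) ↔
    (∃ U : Fin 4 → Fin n → Bool,
        (∑ i : Fin 4,
          (Finset.univ.filter fun j : Fin m =>
            ℓ j = i ∧ ∃ l ∈ F j, g l.1 ≠ i ∧ U (g l.1) l.1 = l.2).card) = t) := by
  have key : ∀ σ : Fin n → Bool, ∀ U : Fin 4 → Fin n → Bool,
      (∀ v, σ v = U (g v) v) →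
      (∑ i : Fin 4, (Finset.univ.filter fun j : Fin m =>
          ℓ j = i ∧ ∃ l ∈ F j, g l.1 ≠ i ∧ U (g l.1) l.1 = l.2).card)
        = (Finset.univ.filter fun j : Fin m => ∃ l ∈ F j, σ l.1 = l.2).card := by
    intro σ U hσU
    rw [Finset.card_eq_sum_card_fiberwise (f := ℓ) (t := Finset.univ)
      (fun _ _ => Finset.mem_univ _)]
    apply Finset.sum_congr rfl
    intro i _
    congr 1
    ext j
    simp only [Finset.mem_filter, Finset.mem_univ, true_and]
    constructor
    · rintro ⟨hi, l, hl, hne, hUl⟩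
      exact ⟨⟨l, hl, by rw [hσU]; exact hUl⟩, hi⟩
    · rintro ⟨⟨l, hl, hs⟩, hi⟩
      exact ⟨hi, l, hl, by rw [← hi]; exact hℓ j l hl, by rw [← hσU]; exact hs⟩
  constructor
  · rintro ⟨σ, hσ⟩
    exact ⟨fun _ => σ, by rwa [key σ (fun _ => σ) (fun v => rfl)]⟩
  · rintro ⟨U, hU⟩
    exact ⟨fun v => U (g v) v, by rwa [← key _ U (fun v => rfl)]⟩
end

section
/- Let l be an even positive natural number, m a natural number, I a type, e : I → (Fin l → Bool) an injective function such that w(e i) = l/2 for every i ∈ I, P : I → Prop a predicate, and for each i ∈ I a Boolean function g_i : (Fin m → Bool) → Bool such that g_i is monotone whenever ¬P i. Define f : (Fin l → Bool) × (Fin m → Bool) → Bool by: f(c, x) = true if w(c) > l/2; f(c, x) = false if w(c) < l/2; and, when w(c) = l/2: f(c, x) = true if c is not in the range of e, f(c, x) = false if c = e i and P i holds, and f(c, x) = g_i x if c = e i and P i fails. Then f is monotone with respect to the product (coordinatewise) order on (Fin l → Bool) × (Fin m → Bool). -/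
/-- Monotonicity of the universal function `f` (Property 1 in the proof of
Theorem 1.1): given an injective encoding `e` into balanced vectors of length `l`,
a predicate `P`, and functions `g i` monotone whenever `¬ P i`, the function `f`
defined by weight comparison and by the case analysis on the range of `e` is monotone
with respect to the product order. -/
theorem stmt_9 (l m : ℕ) (hl0 : 0 < l) (hl2 : l % 2 = 0)
    (I : Type*) (e : I → (Fin l → Bool)) (he : Function.Injective e)
    (hew : ∀ i : I, (Finset.univ.filter fun j => e i j = true).card = l / 2)
    (P : I → Prop) (g : I → (Fin m → Bool) → Bool)
    (hg : ∀ i : I, ¬ P i → Monotone (g i))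
    (f : (Fin l → Bool) × (Fin m → Bool) → Bool)
    (hf_gt : ∀ (c : Fin l → Bool) (x : Fin m → Bool),
      l / 2 < (Finset.univ.filter fun j => c j = true).card → f (c, x) = true)
    (hf_lt : ∀ (c : Fin l → Bool) (x : Fin m → Bool),
      (Finset.univ.filter fun j => c j = true).card < l / 2 → f (c, x) = false)
    (hf_out : ∀ (c : Fin l → Bool) (x : Fin m → Bool),
      (Finset.univ.filter fun j => c j = true).card = l / 2 →
      (∀ i : I, e i ≠ c) → f (c, x) = true)
    (hf_sat : ∀ (i : I) (x : Fin m → Bool), P i → f (e i, x) = false)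
    (hf_unsat : ∀ (i : I) (x : Fin m → Bool), ¬ P i → f (e i, x) = g i x) :
    Monotone f := by
  rintro ⟨c, x⟩ ⟨c', x'⟩ ⟨hc, hx⟩
  simp only [Prod.fst, Prod.snd] at hc hx
  set w : (Fin l → Bool) → ℕ := fun c => (Finset.univ.filter fun j => c j = true).card with hw
  have hsub : (Finset.univ.filter fun j => c j = true) ⊆
      (Finset.univ.filter fun j => c' j = true) := by
    intro j hj
    simp only [Finset.mem_filter, Finset.mem_univ, true_and] at hj ⊢
    have := hc j
    rw [hj] at this
    cases hcj : c' j
    · rw [hcj] at this; exact absurd this (by simp)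
    · rfl
  have hwle : w c ≤ w c' := Finset.card_le_card hsub
  rcases lt_trichotomy (w c') (l / 2) with h' | h' | h'
  · rw [hf_lt c x (lt_of_le_of_lt hwle h')]; exact Bool.false_le _
  · rcases lt_or_eq_of_le hwle with h | h
    · rw [hf_lt c x (h.trans_eq h')]; exact Bool.false_le _
    · have hcc : c = c' := by
        have hs : (Finset.univ.filter fun j => c j = true) =
            (Finset.univ.filter fun j => c' j = true) :=
          Finset.eq_of_subset_of_card_le hsub (le_of_eq h.symm)
        funext j
        have : (j ∈ Finset.univ.filter fun j => c j = true) ↔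
            (j ∈ Finset.univ.filter fun j => c' j = true) := by rw [hs]
        simp only [Finset.mem_filter, Finset.mem_univ, true_and] at this
        cases hcj : c j <;> cases hcj' : c' j <;> simp_all
      subst hcc
      by_cases hr : ∀ i : I, e i ≠ c
      · rw [hf_out c x' (h.trans h') hr]; exact Bool.le_true _
      · push_neg at hr
        obtain ⟨i, hi⟩ := hr
        subst hi
        by_cases hp : P i
        · rw [hf_sat i x hp]; exact Bool.false_le _
        · rw [hf_unsat i x hp, hf_unsat i x' hp]; exact hg i hp hx
  · rw [hf_gt c' x' h']; exact Bool.le_true _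
end
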